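/- A stochastic matrix M ∈ Stoch(nm', nm) is a conditionally mixing operation (it is X↛Y no-signalling and preserves every state of the form u^X ⊗ e_y, mapping it to u^X ⊗ q for some probability vector q) if and only if M can be written as M = Σ_{y,y'} D_{(y,y')} ⊗ r_{y'|y} e_{y'} e_y^T where each D_{(y,y')} is an n×n doubly stochastic matrix and R = (r_{y'|y}) ∈ Stoch(m',m). -/
import Mathlib


/-- A column stochastic matrix: nonnegative entries, each column sums to 1. -/
def ColStoch {α β : Type*} [Fintype α] [Fintype β] (M : Matrix α β ℝ) : Prop :=
  (∀ i j, 0 ≤ M i j) ∧ ∀ j, ∑ i, M i j = 1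

/-- A doubly stochastic matrix. -/
def DoublyStoch {n : ℕ} (D : Matrix (Fin n) (Fin n) ℝ) : Prop :=
  ColStoch D ∧ ∀ i, ∑ j, D i j = 1

/-- `X ↛ Y` no-signalling. -/
def NoSignal {n m m' : ℕ} (M : Matrix (Fin n × Fin m') (Fin n × Fin m) ℝ) : Prop :=
  ∀ (y : Fin m) (y' : Fin m') (x₁ x₂ : Fin n),
    ∑ x', M (x', y') (x₁, y) = ∑ x', M (x', y') (x₂, y)

/-- A probability vector. -/
def ProbVec {k : ℕ} (p : Fin k → ℝ) : Prop :=
  (∀ i, 0 ≤ p i) ∧ ∑ i, p i = 1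

/-- `M` preserves every state of the form `u^X ⊗ e_y`: the image is
`u^X ⊗ q` for some probability vector `q` on `Y'`. -/
def PreservesUniform {n m m' : ℕ}
    (M : Matrix (Fin n × Fin m') (Fin n × Fin m) ℝ) : Prop :=
  ∀ y : Fin m, ∃ q : Fin m' → ℝ, ProbVec q ∧
    ∀ (x' : Fin n) (y' : Fin m'),
      M.mulVec (fun xy => if xy.2 = y then (1 : ℝ) / n else 0) (x', y') =
        ((1 : ℝ) / n) * q y'

/-- A stochastic matrix is a conditionally mixing operation (no-signalling and
uniform-preserving) iff it has the conditionally doubly stochastic form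
`M = Σ_{y,y'} D_{(y,y')} ⊗ r_{y'|y} e_{y'} e_y^T`. -/
theorem cmo_iff_cds {n m m' : ℕ}
    (M : Matrix (Fin n × Fin m') (Fin n × Fin m) ℝ) (hM : ColStoch M) :
    (NoSignal M ∧ PreservesUniform M) ↔
    ∃ (D : Fin m → Fin m' → Matrix (Fin n) (Fin n) ℝ)
      (R : Matrix (Fin m') (Fin m) ℝ),
      (∀ y y', DoublyStoch (D y y')) ∧ ColStoch R ∧
      (∀ x' y' x y, M (x', y') (x, y) = D y y' x' x * R y' y) := by
  have hmul : ∀ (y : Fin m) (x' : Fin n) (y' : Fin m'),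
      M.mulVec (fun xy => if xy.2 = y then (1 : ℝ) / n else 0) (x', y') =
        (1 / n) * ∑ x, M (x', y') (x, y) := by
    intro y x' y'
    simp only [Matrix.mulVec, dotProduct, Fintype.sum_prod_type, mul_ite, mul_zero,
      Finset.sum_ite_eq', Finset.mem_univ, if_true]
    rw [Finset.mul_sum]
    exact Finset.sum_congr rfl fun x _ => mul_comm _ _
  constructor
  · rintro ⟨hNS, hPU⟩
    set q : Fin m → Fin m' → ℝ := fun y => (hPU y).choose with hqdef
    have hqp : ∀ y, ProbVec (q y) := fun y => (hPU y).choose_spec.1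
    rcases Nat.eq_zero_or_pos n with hn | hn
    · subst hn
      refine ⟨fun _ _ => fun x' _ => x'.elim0, fun y' y => q y y', ?_, ?_, ?_⟩
      · intro y y'
        exact ⟨⟨fun i => i.elim0, fun j => j.elim0⟩, fun i => i.elim0⟩
      · exact ⟨fun y' y => (hqp y).1 y', fun y => (hqp y).2⟩
      · intro x'; exact x'.elim0
    · have hn0 : (n : ℝ) ≠ 0 := (Nat.cast_pos.2 hn).ne'
      have hrow : ∀ (y : Fin m) (x' : Fin n) (y' : Fin m'),
          ∑ x, M (x', y') (x, y) = q y y' := by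
        intro y x' y'
        have h := (hPU y).choose_spec.2 x' y'
        rw [hmul] at h
        exact mul_left_cancel₀ (one_div_ne_zero hn0) h
      have hcol : ∀ (y : Fin m) (x : Fin n) (y' : Fin m'),
          ∑ x', M (x', y') (x, y) = q y y' := by
        intro y x y'
        have h1 : ∑ x₂ : Fin n, ∑ x', M (x', y') (x₂, y)
            = (n : ℝ) * ∑ x', M (x', y') (x, y) := by
          rw [Finset.sum_congr rfl fun x₂ _ => hNS y y' x₂ x]
          simp [Finset.sum_const, nsmul_eq_mul]
        have h2 : ∑ x₂ : Fin n, ∑ x', M (x', y') (x₂, y) = (n : ℝ) * q y y' := by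
          rw [Finset.sum_comm]
          rw [Finset.sum_congr rfl fun x' _ => hrow y x' y']
          simp [Finset.sum_const, nsmul_eq_mul]
        exact mul_left_cancel₀ hn0 (h1.symm.trans h2)
      refine ⟨fun y y' => fun x' x =>
          if q y y' = 0 then 1 / n else M (x', y') (x, y) / q y y',
        fun y' y => q y y', ?_, ?_, ?_⟩
      · intro y y'
        by_cases h : q y y' = 0
        · refine ⟨⟨fun i j => ?_, fun j => ?_⟩, fun i => ?_⟩
          · simp only [if_pos h]; positivity
          · simp only [if_pos h, Finset.sum_const, Finset.card_univ, Fintype.card_fin,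
              nsmul_eq_mul, mul_one_div]
            exact div_self hn0
          · simp only [if_pos h, Finset.sum_const, Finset.card_univ, Fintype.card_fin,
              nsmul_eq_mul, mul_one_div]
            exact div_self hn0
        · refine ⟨⟨fun i j => ?_, fun j => ?_⟩, fun i => ?_⟩
          · simp only [if_neg h]
            exact div_nonneg (hM.1 _ _) ((hqp y).1 y')
          · simp only [if_neg h, ← Finset.sum_div, hcol y j y', div_self h]
          · simp only [if_neg h, ← Finset.sum_div, hrow y i y', div_self h]
      · exact ⟨fun y' y => (hqp y).1 y', fun y => (hqp y).2⟩
      · intro x' y' x y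
        by_cases h : q y y' = 0
        · have hM0 : M (x', y') (x, y) = 0 := by
            have hsum : ∑ x', M (x', y') (x, y) = 0 := (hcol y x y').trans h
            exact (Finset.sum_eq_zero_iff_of_nonneg
              (fun i _ => hM.1 _ _)).1 hsum x' (Finset.mem_univ _)
          simp [h, hM0]
        · simp only [h, if_false, div_mul_cancel₀ _ h]
  · rintro ⟨D, R, hD, hR, hMeq⟩
    constructor
    · intro y y' x₁ x₂
      simp only [hMeq, ← Finset.sum_mul, (hD y y').1.2 x₁, (hD y y').1.2 x₂]
    · intro y
      refine ⟨fun y' => R y' y, ⟨fun y' => hR.1 y' y, hR.2 y⟩, fun x' y' => ?_⟩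
      rw [hmul]
      have h : ∑ x, M (x', y') (x, y) = R y' y := by
        simp only [hMeq, ← Finset.sum_mul, (hD y y').2 x', one_mul]
      rw [h]
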